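/- Let B ⊆ ℝ^{n+1} be a symmetric convex body with n ≥ 4, and let Γ₁, Γ₂ be two distinct linear hyperplanes such that K_i = Γ_i ∩ B are affine symmetric bodies of revolution with axes L_i and associated hyperplanes of revolution H_i (i = 1,2). If L₁ ⊆ H₂, then K₁ is an ellipsoid. -/

import Mathlib

/-- A symmetric convex body: compact, convex, nonempty interior, invariant under `x ↦ -x`. -/
def IsSymmConvexBody {E : Type*} [NormedAddCommGroup E] [InnerProductSpace ℝ E]
    (K : Set E) : Prop :=
  IsCompact K ∧ Convex ℝ K ∧ (interior K).Nonempty ∧ ∀ x ∈ K, -x ∈ K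

/-- An ellipsoid: an affine image of the closed unit Euclidean ball. -/
def IsEllipsoid {E : Type*} [NormedAddCommGroup E] [InnerProductSpace ℝ E]
    (K : Set E) : Prop :=
  ∃ (T : E ≃L[ℝ] E) (c : E), K = (fun x => c + T x) '' Metric.closedBall (0 : E) 1

/-- A (honest) symmetric body of revolution with axis spanned by the unit vector `v`:
every section by an affine hyperplane orthogonal to the axis is a closed ball
centered on the axis (possibly empty). -/
def IsBodyOfRevolutionWith {E : Type*} [NormedAddCommGroup E] [InnerProductSpace ℝ E]
    (K : Set E) (v : E) : Prop :=
  ‖v‖ = 1 ∧ ∀ t : ℝ,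
    K ∩ {x | (inner ℝ v x : ℝ) = t} = ∅ ∨
    ∃ r : ℝ, 0 ≤ r ∧
      K ∩ {x | (inner ℝ v x : ℝ) = t} =
        Metric.closedBall (t • v) r ∩ {x | (inner ℝ v x : ℝ) = t}

/-- An affine symmetric body of revolution with axis of revolution `L` and associated
hyperplane of revolution `H`: some linear (continuous linear equivalence) image of `K`
is an honest body of revolution whose axis is the image of `L` and whose hyperplane of
revolution (the orthogonal complement of the axis) is the image of `H`. -/
def IsAffineBodyOfRevolution {E : Type*} [NormedAddCommGroup E] [InnerProductSpace ℝ E]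
    (K : Set E) (L H : Submodule ℝ E) : Prop :=
  ∃ (T : E ≃L[ℝ] E) (v : E),
    IsBodyOfRevolutionWith (T '' K) v ∧
    L.map ((T : E →L[ℝ] E) : E →ₗ[ℝ] E) = Submodule.span ℝ {v} ∧
    H.map ((T : E →L[ℝ] E) : E →ₗ[ℝ] E) = (Submodule.span ℝ {v})ᗮ

/-!
After a linear change of coordinates `K₁` is a body of revolution about a unit vector `v`, so it
is determined by its meridian section: its section by the plane spanned by `v` and any unit
`u ⟂ v`. Since `L₁ ⊆ H₂` and `Γ₁ ∩ H₂` has dimension at least `n - 2 ≥ 2`, `u` can be chosen so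
that this plane pulls back into `H₂`. There the body is cut out by the central section of the
body of revolution `K₂`, a linear preimage of a ball, so the meridian section is an ellipse
`‖t • x + s • y‖ ≤ r`. Its symmetry under `s ↦ -s` forces `x ⟂ y`, and revolving an ellipse
with an axis along `v` about `v` gives an ellipsoid.
-/

open scoped RealInnerProductSpace
open Module Filter Topology

variable {V E F : Type*} [NormedAddCommGroup V] [NormedSpace ℝ V]
  [NormedAddCommGroup E] [InnerProductSpace ℝ E] [NormedAddCommGroup F] [InnerProductSpace ℝ F]

lemma norm_le_of_forall_norm_smul_le {x y : V} {r : ℝ} (hr : 0 < r)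
    (h : ∀ t : ℝ, ‖t • y‖ ≤ r → ‖t • x‖ ≤ r) : ‖x‖ ≤ ‖y‖ := by
  by_contra! hlt
  have hs : 0 < ‖x‖ + ‖y‖ := by linarith [norm_nonneg y]
  set t := 2 * r / (‖x‖ + ‖y‖)
  have ht : 0 < t := by positivity
  have key := h t
  rw [norm_smul, norm_smul, Real.norm_of_nonneg ht.le, div_mul_eq_mul_div, div_mul_eq_mul_div,
    div_le_iff₀ hs, div_le_iff₀ hs] at key
  nlinarith [key (by nlinarith)]

lemma eq_zero_of_isBounded_of_forall_smul_mem {K : Set V} (hK : Bornology.IsBounded K) {v : V}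
    (h : ∀ t : ℝ, t • v ∈ K) : v = 0 := by
  obtain ⟨R, hR⟩ := hK.exists_norm_le
  by_contra hv
  have := hR _ (h ((|R| + 1) / ‖v‖))
  rw [norm_smul, Real.norm_of_nonneg (by positivity), div_mul_cancel₀ _ (norm_ne_zero_iff.2 hv)]
    at this
  linarith [le_abs_self R]

lemma exists_pos_smul_mem_of_mem_nhds_zero {K : Set V} (hK : K ∈ 𝓝 0) (v : V) :
    ∃ t : ℝ, 0 < t ∧ t • v ∈ K := by
  have hcont : Tendsto (fun t : ℝ => t • v) (𝓝 0) (𝓝 0) := by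
    simpa using (tendsto_id (x := 𝓝 (0 : ℝ))).smul_const v
  obtain ⟨t, htK, ht⟩ :=
    ((eventually_nhdsWithin_of_eventually_nhds (hcont.eventually hK)).and
      (self_mem_nhdsWithin : Set.Ioi (0 : ℝ) ∈ 𝓝[>] 0)).exists
  exact ⟨t, ht, htK⟩

lemma inner_eq_zero_of_forall_norm_le_imp_neg {x y : F} {r : ℝ} (hr : 0 < r)
    (h : ∀ t s : ℝ, ‖t • x + s • y‖ ≤ r → ‖t • x + (-s) • y‖ ≤ r) : ⟪x, y⟫ = 0 := by
  have heq : ‖x + y‖ = ‖x - y‖ := le_antisymm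
    (norm_le_of_forall_norm_smul_le hr fun t ht => by
      simpa [smul_sub] using h t (-t) (by simpa [smul_add, sub_eq_add_neg] using ht))
    (norm_le_of_forall_norm_smul_le hr fun t ht => by
      simpa [smul_add, sub_eq_add_neg] using h t t (by simpa [smul_add] using ht))
  have := congrArg (· ^ 2) heq
  simp only [norm_add_sq_real, norm_sub_sq_real] at this
  linarith

lemma IsSymmConvexBody.zero_mem_interior {B : Set E} (hB : IsSymmConvexBody B) :
    (0 : E) ∈ interior B := by
  obtain ⟨-, hconv, ⟨x, hx⟩, hneg⟩ := hB
  have hnx : -x ∈ interior B := by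
    rw [mem_interior_iff_mem_nhds] at hx ⊢
    have := (continuous_neg.tendsto (-x)).eventually (by rwa [neg_neg])
    exact this.mono fun y hy => (by simpa using hneg _ hy : y ∈ B)
  simpa using hconv.interior hx hnx (by norm_num : (0 : ℝ) ≤ 1 / 2) (by norm_num) (add_halves 1)

lemma IsEllipsoid.image {K : Set E} (hK : IsEllipsoid K) (T : E ≃L[ℝ] E) :
    IsEllipsoid (T '' K) := by
  obtain ⟨S, c, rfl⟩ := hK
  refine ⟨S.trans T, T c, ?_⟩
  rw [Set.image_image]
  simp only [map_add, ContinuousLinearEquiv.trans_apply]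

lemma Submodule.exists_norm_eq_one_inner_eq_zero {M : Submodule ℝ E} (hM : 2 ≤ finrank ℝ M)
    {v : E} (hv : v ∈ M) : ∃ u ∈ M, ‖u‖ = 1 ∧ ⟪v, u⟫ = 0 := by
  have : FiniteDimensional ℝ M := Module.finite_of_finrank_pos (by omega)
  have hdim := Submodule.finrank_add_inf_finrank_orthogonal ((span_singleton_le_iff_mem v M).2 hv)
  have hline : finrank ℝ (ℝ ∙ v) ≤ 1 := by simpa using finrank_span_le_card ({v} : Set E)
  obtain ⟨w, hw, hw0⟩ := exists_mem_ne_zero_of_ne_bot (p := (ℝ ∙ v)ᗮ ⊓ M) fun hbot => by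
    rw [hbot, finrank_bot] at hdim
    omega
  refine ⟨‖w‖⁻¹ • w, M.smul_mem _ hw.2, by simpa using norm_smul_inv_norm (𝕜 := ℝ) hw0, ?_⟩
  rw [inner_smul_right, mem_orthogonal_singleton_iff_inner_right.1 hw.1, mul_zero]

lemma Submodule.finrank_add_finrank_le_finrank_inf_add_finrank {K V : Type*} [DivisionRing K]
    [AddCommGroup V] [Module K V] [FiniteDimensional K V] (s t : Submodule K V) :
    finrank K s + finrank K t ≤ finrank K ↥(s ⊓ t) + finrank K V := by
  rw [← finrank_sup_add_finrank_inf_eq, add_comm]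
  exact Nat.add_le_add_left (finrank_le _) _

noncomputable def axialScaling (v : E) (a b : ℝ) : E →L[ℝ] E :=
  a • (innerSL ℝ v).smulRight v + b • (ContinuousLinearMap.id ℝ E - (innerSL ℝ v).smulRight v)

section axialScaling

variable {v : E}

@[simp]
lemma axialScaling_apply (a b : ℝ) (x : E) :
    axialScaling v a b x = a • (⟪v, x⟫ • v) + b • (x - ⟪v, x⟫ • v) := by
  simp [axialScaling]

lemma axialScaling_axialScaling (hv : ‖v‖ = 1) (a b a' b' : ℝ) (x : E) :
    axialScaling v a b (axialScaling v a' b' x) = axialScaling v (a * a') (b * b') x := by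
  have hvv : ⟪v, v⟫ = 1 := inner_self_eq_one_of_norm_eq_one hv
  simp only [axialScaling_apply, inner_add_right, inner_sub_right, inner_smul_right, hvv]
  module

lemma axialScaling_one_one (x : E) : axialScaling v 1 1 x = x := by
  simp

lemma norm_axialScaling_sq (hv : ‖v‖ = 1) (a b : ℝ) (x : E) :
    ‖axialScaling v a b x‖ ^ 2 = (a * ⟪v, x⟫) ^ 2 + (b * ‖x - ⟪v, x⟫ • v‖) ^ 2 := by
  have hvv : ⟪v, v⟫ = 1 := inner_self_eq_one_of_norm_eq_one hv
  have horth : ⟪a • (⟪v, x⟫ • v), b • (x - ⟪v, x⟫ • v)⟫ = 0 := by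
    simp only [inner_smul_left, inner_smul_right, inner_sub_right, real_inner_comm x v, hvv,
      RCLike.conj_to_real]
    ring
  rw [axialScaling_apply, norm_add_sq_real, horth, norm_smul, norm_smul, norm_smul, hv,
    Real.norm_eq_abs, Real.norm_eq_abs, Real.norm_eq_abs]
  simp only [mul_one, mul_pow, sq_abs]
  ring

noncomputable def axialScalingEquiv (hv : ‖v‖ = 1) {a b : ℝ} (ha : a ≠ 0) (hb : b ≠ 0) :
    E ≃L[ℝ] E :=
  .equivOfInverse (axialScaling v a b) (axialScaling v a⁻¹ b⁻¹)
    (fun x => by rw [axialScaling_axialScaling hv, inv_mul_cancel₀ ha, inv_mul_cancel₀ hb,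
      axialScaling_one_one])
    (fun x => by rw [axialScaling_axialScaling hv, mul_inv_cancel₀ ha, mul_inv_cancel₀ hb,
      axialScaling_one_one])

lemma isEllipsoid_setOf_sq_add_sq_le (hv : ‖v‖ = 1) {a b : ℝ} (ha : a ≠ 0) (hb : b ≠ 0) :
    IsEllipsoid {x : E | (a * ⟪v, x⟫) ^ 2 + (b * ‖x - ⟪v, x⟫ • v‖) ^ 2 ≤ 1} := by
  refine ⟨(axialScalingEquiv hv ha hb).symm, 0, ?_⟩
  simp only [zero_add, ContinuousLinearEquiv.image_symm_eq_preimage]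
  ext x
  rw [Set.mem_ofPred_eq, ← norm_axialScaling_sq hv, sq_le_one_iff₀ (norm_nonneg _)]
  simp [axialScalingEquiv]

end axialScaling

namespace IsBodyOfRevolutionWith

variable {K : Set E} {v : E}

lemma mem_of_inner_eq_of_norm_le (hK : IsBodyOfRevolutionWith K v) {x y : E} (hx : x ∈ K)
    (hy : ⟪v, y⟫ = ⟪v, x⟫) (hxy : ‖y - ⟪v, x⟫ • v‖ ≤ ‖x - ⟪v, x⟫ • v‖) : y ∈ K := by
  have hx' : x ∈ K ∩ {z | ⟪v, z⟫ = ⟪v, x⟫} := ⟨hx, rfl⟩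
  rcases hK.2 ⟪v, x⟫ with h | ⟨r, -, hr⟩
  · rw [h] at hx'
    exact hx'.elim
  · rw [hr, Set.mem_inter_iff, Metric.mem_closedBall, dist_eq_norm] at hx'
    have hy' : y ∈ Metric.closedBall (⟪v, x⟫ • v) r ∩ {z | ⟪v, z⟫ = ⟪v, x⟫} := by
      rw [Set.mem_inter_iff, Metric.mem_closedBall, dist_eq_norm]
      exact ⟨hxy.trans hx'.1, hy⟩
    rw [← hr] at hy'
    exact hy'.1

lemma mem_iff_of_inner_eq_of_norm_eq (hK : IsBodyOfRevolutionWith K v) {x y : E}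
    (hy : ⟪v, y⟫ = ⟪v, x⟫) (hxy : ‖y - ⟪v, y⟫ • v‖ = ‖x - ⟪v, x⟫ • v‖) : x ∈ K ↔ y ∈ K := by
  rw [hy] at hxy
  exact ⟨fun hx => hK.mem_of_inner_eq_of_norm_le hx hy hxy.le,
    fun hy' => hK.mem_of_inner_eq_of_norm_le hy' hy.symm (by rw [hy, hxy])⟩

variable {u : E}

lemma mem_iff_meridian (hK : IsBodyOfRevolutionWith K v) (hu : ‖u‖ = 1) (huv : ⟪v, u⟫ = 0)
    (x : E) : x ∈ K ↔ ⟪v, x⟫ • v + ‖x - ⟪v, x⟫ • v‖ • u ∈ K := by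
  refine hK.mem_iff_of_inner_eq_of_norm_eq ?_ ?_ <;>
    simp only [inner_add_right, inner_smul_right, inner_self_eq_one_of_norm_eq_one hK.1, huv,
      mul_one, mul_zero, add_zero]
  rw [add_sub_cancel_left, norm_smul, hu, Real.norm_of_nonneg (norm_nonneg _), mul_one]

lemma add_neg_smul_mem (hK : IsBodyOfRevolutionWith K v) (huv : ⟪v, u⟫ = 0)
    {t s : ℝ} (h : t • v + s • u ∈ K) : t • v + (-s) • u ∈ K := by
  refine (hK.mem_iff_of_inner_eq_of_norm_eq ?_ ?_).1 h <;>
    simp only [inner_add_right, inner_smul_right, inner_self_eq_one_of_norm_eq_one hK.1, huv,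
      mul_one, mul_zero, add_zero]
  rw [add_sub_cancel_left, add_sub_cancel_left, norm_smul, norm_smul, norm_neg]

lemma exists_mem_iff_norm_le_of_inner_eq_zero (hK : IsBodyOfRevolutionWith K v) (h0 : 0 ∈ K) :
    ∃ r : ℝ, ∀ x, ⟪v, x⟫ = 0 → (x ∈ K ↔ ‖x‖ ≤ r) := by
  rcases hK.2 0 with h | ⟨r, -, hr⟩
  · have h0' : (0 : E) ∈ K ∩ {x | ⟪v, x⟫ = 0} := ⟨h0, inner_zero_right v⟩
    rw [h] at h0'
    exact h0'.elim
  · refine ⟨r, fun x hx => ?_⟩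
    have := congrArg (x ∈ ·) hr
    simpa [hx] using this

lemma isEllipsoid_of_mem_iff (hK : IsBodyOfRevolutionWith K v) (hu : ‖u‖ = 1)
    (huv : ⟪v, u⟫ = 0) {a b : ℝ} (ha : a ≠ 0) (hb : b ≠ 0)
    (hmem : ∀ t s : ℝ, t • v + s • u ∈ K ↔ (a * t) ^ 2 + (b * s) ^ 2 ≤ 1) : IsEllipsoid K := by
  convert isEllipsoid_setOf_sq_add_sq_le hK.1 ha hb using 1
  ext x
  rw [hK.mem_iff_meridian hu huv, hmem]
  rfl

lemma isEllipsoid_of_mem_iff_norm_le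
    (hK : IsBodyOfRevolutionWith K v) (hbdd : Bornology.IsBounded K) (h0 : K ∈ 𝓝 0)
    (hu : ‖u‖ = 1) (huv : ⟪v, u⟫ = 0) {x y : F} {r : ℝ}
    (hmem : ∀ t s : ℝ, t • v + s • u ∈ K ↔ ‖t • x + s • y‖ ≤ r) : IsEllipsoid K := by
  have hr : 0 ≤ r := by simpa using (hmem 0 0).1 (by simpa using mem_of_mem_nhds h0)
  have hx : x ≠ 0 := by
    rintro rfl
    have hv := eq_zero_of_isBounded_of_forall_smul_mem hbdd fun t => by
      simpa using (hmem t 0).2 (by simpa using hr)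
    simpa [hv] using hK.1
  have hy : y ≠ 0 := by
    rintro rfl
    have hu0 := eq_zero_of_isBounded_of_forall_smul_mem hbdd fun s => by
      simpa using (hmem 0 s).2 (by simpa using hr)
    simp [hu0] at hu
  have hrpos : 0 < r := by
    obtain ⟨t, ht, htK⟩ := exists_pos_smul_mem_of_mem_nhds_zero h0 v
    have := (hmem t 0).1 (by simpa using htK)
    rw [zero_smul, add_zero, norm_smul, Real.norm_of_nonneg ht.le] at this
    exact lt_of_lt_of_le (by positivity) this
  have hxy : ⟪x, y⟫ = 0 := inner_eq_zero_of_forall_norm_le_imp_neg hrpos fun t s h =>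
    (hmem t (-s)).1 (hK.add_neg_smul_mem huv ((hmem t s).2 h))
  refine hK.isEllipsoid_of_mem_iff hu huv (a := ‖x‖ / r) (b := ‖y‖ / r) (by positivity)
    (by positivity) fun t s => ?_
  have hnorm : (‖x‖ / r * t) ^ 2 + (‖y‖ / r * s) ^ 2 = ‖t • x + s • y‖ ^ 2 / r ^ 2 := by
    rw [norm_add_sq_real, inner_smul_left, inner_smul_right, hxy, norm_smul, norm_smul,
      Real.norm_eq_abs, Real.norm_eq_abs]
    field_simp
    simp only [sq_abs]
    ring
  rw [hmem, hnorm, div_le_one (by positivity), sq_le_sq₀ (norm_nonneg _) hr]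

end IsBodyOfRevolutionWith

namespace IsAffineBodyOfRevolution

variable {K : Set E} {L H : Submodule ℝ E}

lemma finrank_add_one (hK : IsAffineBodyOfRevolution K L H) [FiniteDimensional ℝ E] :
    finrank ℝ H + 1 = finrank ℝ E := by
  obtain ⟨T, v, hrev, -, hH⟩ := hK
  have hv : v ≠ 0 := by rintro rfl; simpa using hrev.1
  rw [← Submodule.finrank_add_finrank_orthogonal (ℝ ∙ v), finrank_span_singleton hv, ← hH,
    add_comm]
  exact congrArg (1 + ·) (LinearEquiv.finrank_map_eq T.toLinearEquiv H).symm

lemma exists_mem_iff_norm_le (hK : IsAffineBodyOfRevolution K L H) (h0 : 0 ∈ K) :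
    ∃ (S : E →L[ℝ] E) (r : ℝ), ∀ q ∈ H, q ∈ K ↔ ‖S q‖ ≤ r := by
  obtain ⟨T, v, hrev, -, hH⟩ := hK
  obtain ⟨r, hr⟩ := hrev.exists_mem_iff_norm_le_of_inner_eq_zero ⟨0, h0, map_zero T⟩
  refine ⟨T, r, fun q hq => ?_⟩
  change q ∈ K ↔ ‖T q‖ ≤ r
  have hTq : T q ∈ (ℝ ∙ v)ᗮ := hH ▸ Submodule.mem_map_of_mem hq
  rw [← hr _ (Submodule.mem_orthogonal_singleton_iff_inner_right.1 hTq),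
    T.injective.mem_set_image]

lemma isEllipsoid_of_mem_iff_norm_le (hK : IsAffineBodyOfRevolution K L H)
    (hbdd : Bornology.IsBounded K) (h0 : K ∈ 𝓝 0) {P : Submodule ℝ E} (hLP : L ≤ P)
    (hP : 2 ≤ finrank ℝ P) (S : E →ₗ[ℝ] F) (r : ℝ) (hS : ∀ p ∈ P, p ∈ K ↔ ‖S p‖ ≤ r) :
    IsEllipsoid K := by
  obtain ⟨T, v, hrev, hL, -⟩ := hK
  have hvP : v ∈ P.map (T : E →ₗ[ℝ] E) :=
    Submodule.map_mono hLP (hL ▸ Submodule.mem_span_singleton_self v)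
  obtain ⟨u, huP, hu, huv⟩ := Submodule.exists_norm_eq_one_inner_eq_zero
    (by rwa [LinearEquiv.finrank_map_eq T.toLinearEquiv]) hvP
  rw [← T.symm_image_image K]
  refine IsEllipsoid.image ?_ T.symm
  refine hrev.isEllipsoid_of_mem_iff_norm_le (T.lipschitz.isBounded_image hbdd) ?_ hu huv
    (x := S (T.symm v)) (y := S (T.symm u)) (r := r) fun t s => ?_
  · rw [T.image_eq_preimage_symm]
    exact T.symm.continuous.continuousAt.preimage_mem_nhds (by rwa [map_zero])
  · have hP' : T.symm (t • v + s • u) ∈ P := by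
      obtain ⟨v', hv', rfl⟩ := hvP
      obtain ⟨u', hu', rfl⟩ := huP
      simpa using P.add_mem (P.smul_mem t hv') (P.smul_mem s hu')
    rw [T.image_eq_preimage_symm, Set.mem_preimage, hS _ hP']
    simp

end IsAffineBodyOfRevolution

theorem section_with_axis_in_other_hyperplane_of_revolution_general
    {n : ℕ} (hn : 4 ≤ n)
    (B : Set (EuclideanSpace ℝ (Fin (n + 1)))) (hB : IsSymmConvexBody B)
    (Γ₁ Γ₂ : Submodule ℝ (EuclideanSpace ℝ (Fin (n + 1))))
    (hΓ₁ : Module.finrank ℝ Γ₁ = n) (hΓ₂ : Module.finrank ℝ Γ₂ = n)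
    (L₁ H₁ : Submodule ℝ Γ₁) (L₂ H₂ : Submodule ℝ Γ₂)
    (h₁ : IsAffineBodyOfRevolution
      (((↑) : Γ₁ → EuclideanSpace ℝ (Fin (n + 1))) ⁻¹' B) L₁ H₁)
    (h₂ : IsAffineBodyOfRevolution
      (((↑) : Γ₂ → EuclideanSpace ℝ (Fin (n + 1))) ⁻¹' B) L₂ H₂)
    (hLH : L₁.map Γ₁.subtype ≤ H₂.map Γ₂.subtype) :
    IsEllipsoid (((↑) : Γ₁ → EuclideanSpace ℝ (Fin (n + 1))) ⁻¹' B) := by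
  have h0 := hB.zero_mem_interior
  obtain ⟨S, r, hS⟩ := h₂.exists_mem_iff_norm_le
    (interior_subset h0 : (0 : EuclideanSpace ℝ (Fin (n + 1))) ∈ B)
  have hP : 2 ≤ finrank ℝ ((H₂.map Γ₂.subtype).comap Γ₁.subtype) := by
    have hH₂ := h₂.finrank_add_one
    have hdim := Submodule.finrank_add_finrank_le_finrank_inf_add_finrank Γ₁ (H₂.map Γ₂.subtype)
    rw [Submodule.finrank_map_subtype_eq, ← Submodule.map_comap_subtype,
      Submodule.finrank_map_subtype_eq, finrank_euclideanSpace_fin] at hdim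
    omega
  refine h₁.isEllipsoid_of_mem_iff_norm_le
    (isometry_subtype_coe.antilipschitz.isBounded_preimage hB.1.isBounded)
    (continuous_subtype_val.continuousAt.preimage_mem_nhds (mem_interior_iff_mem_nhds.1 h0))
    (fun x hx => hLH (Submodule.mem_map_of_mem hx)) hP
    ((S : Γ₂ →ₗ[ℝ] Γ₂) ∘ₗ (Γ₂.orthogonalProjectionOnto : _ →ₗ[ℝ] Γ₂) ∘ₗ Γ₁.subtype) r
    fun p ⟨q, hq, hqp⟩ => ?_
  have hqp' : (q : EuclideanSpace ℝ (Fin (n + 1))) = p := hqp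
  have hproj : Γ₂.orthogonalProjectionOnto (p : EuclideanSpace ℝ (Fin (n + 1))) = q := by
    rw [← hqp']
    exact Submodule.orthogonalProjectionOnto_mem_subspace_eq_self q
  simpa [hproj, hqp'] using hS q hq

/-- Let B ⊆ ℝ^{n+1}, n ≥ 4, be a symmetric convex body, Γ₁ ≠ Γ₂ two linear hyperplanes
whose sections K_i = Γ_i ∩ B are affine symmetric bodies of revolution with axes L_i and
hyperplanes of revolution H_i. If L₁ ⊆ H₂ then K₁ is an ellipsoid. -/
theorem section_with_axis_in_other_hyperplane_of_revolution
    {n : ℕ} (hn : 4 ≤ n)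
    (B : Set (EuclideanSpace ℝ (Fin (n + 1)))) (hB : IsSymmConvexBody B)
    (Γ₁ Γ₂ : Submodule ℝ (EuclideanSpace ℝ (Fin (n + 1))))
    (hΓ₁ : Module.finrank ℝ Γ₁ = n) (hΓ₂ : Module.finrank ℝ Γ₂ = n)
    (hΓne : Γ₁ ≠ Γ₂)
    (L₁ H₁ : Submodule ℝ Γ₁) (L₂ H₂ : Submodule ℝ Γ₂)
    (h₁ : IsAffineBodyOfRevolution
      (((↑) : Γ₁ → EuclideanSpace ℝ (Fin (n + 1))) ⁻¹' B) L₁ H₁)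
    (h₂ : IsAffineBodyOfRevolution
      (((↑) : Γ₂ → EuclideanSpace ℝ (Fin (n + 1))) ⁻¹' B) L₂ H₂)
    (hLH : L₁.map Γ₁.subtype ≤ H₂.map Γ₂.subtype) :
    IsEllipsoid (((↑) : Γ₁ → EuclideanSpace ℝ (Fin (n + 1))) ⁻¹' B) :=
  section_with_axis_in_other_hyperplane_of_revolution_general hn B hB Γ₁ Γ₂ hΓ₁ hΓ₂ L₁ H₁ L₂ H₂ h₁
    h₂ hLH
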